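/- Let r ≥ 3 and let H be a linear r-uniform hypergraph on an n-element vertex set with no isolated vertices, containing no copy of B_4^r, and satisfying r·|E(H)| = (r+1)·n. Then every vertex of H has degree exactly r+1. -/

import Mathlib

/-!
Give each vertex `w` the weight `1 / d(w)`, so that the total weight of all hyperedges is `n`,
while by hypothesis `n = |E| · r/(r+1)`.  If `d(v) ≥ r + 2`, then a hyperedge `f ∌ v` meets at
most `r` of the hyperedges through `v`, so at least two of them miss `f`; by `B_4^r`-freeness
`f` then meets none of them.  Hence every other vertex of a hyperedge through `v` has degree `1`,
and such a hyperedge has weight at least `r - 1 > r/(r+1)`.  A hyperedge all of whose vertices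
have degree at most `r + 1` has weight at least `r/(r+1)`, with equality only if all these
degrees equal `r + 1`.  Comparing the totals forces equality on every hyperedge.
-/

open Finset

namespace Hypergraph

variable {V : Type*} [DecidableEq V]

def degree (E : Finset (Finset V)) (v : V) : ℕ := #(E.filter (fun e => v ∈ e))

def IsUniform (E : Finset (Finset V)) (r : ℕ) : Prop := ∀ e ∈ E, e.card = r

def IsLinear (E : Finset (Finset V)) : Prop := ∀ e ∈ E, ∀ f ∈ E, e ≠ f → (e ∩ f).card ≤ 1

def B4Free (E : Finset (Finset V)) : Prop :=
  ¬ ∃ e₁ ∈ E, ∃ e₂ ∈ E, ∃ e₃ ∈ E, ∃ f ∈ E, ∃ v : V,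
    e₁ ≠ e₂ ∧ e₁ ≠ e₃ ∧ e₁ ≠ f ∧ e₂ ≠ e₃ ∧ e₂ ≠ f ∧ e₃ ≠ f ∧
    v ∈ e₁ ∧ v ∈ e₂ ∧ v ∈ e₃ ∧ v ∉ f ∧
    (f ∩ e₁).Nonempty ∧ f ∩ e₂ = ∅ ∧ f ∩ e₃ = ∅

def weight (E : Finset (Finset V)) (e : Finset V) : ℚ := ∑ w ∈ e, ((degree E w : ℚ))⁻¹

variable {E : Finset (Finset V)} {r : ℕ} {e f : Finset V} {u v w c : V}

theorem degree_pos_of_mem (he : e ∈ E) (hv : v ∈ e) : 0 < degree E v :=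
  card_pos.mpr ⟨e, mem_filter.mpr ⟨he, hv⟩⟩

theorem IsLinear.eq_of_mem_of_mem (hL : IsLinear E) (he : e ∈ E) (hf : f ∈ E) (huw : u ≠ w)
    (hue : u ∈ e) (hwe : w ∈ e) (huf : u ∈ f) (hwf : w ∈ f) : e = f := by
  by_contra hef
  have hsub : ({u, w} : Finset V) ⊆ e ∩ f := by
    simp [insert_subset_iff, hue, hwe, huf, hwf]
  have := card_le_card hsub
  rw [card_pair huw] at this
  have := hL e he f hf hef
  omega

theorem IsLinear.card_meeting_le (hL : IsLinear E) (hvf : v ∉ f) :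
    #((E.filter (fun e => v ∈ e)).filter (fun e => (f ∩ e).Nonempty)) ≤ f.card := by
  refine card_le_card_of_forall_subsingleton (fun e u => u ∈ e) ?_ ?_
  · intro e he
    obtain ⟨u, hu⟩ := (mem_filter.mp he).2
    exact ⟨u, (mem_inter.mp hu).1, (mem_inter.mp hu).2⟩
  · intro u hu e₁ ⟨he₁, hue₁⟩ e₂ ⟨he₂, hue₂⟩
    simp only [mem_filter] at he₁ he₂
    exact hL.eq_of_mem_of_mem he₁.1.1 he₂.1.1 (ne_of_mem_of_not_mem hu hvf).symm
      he₁.1.2 hue₁ he₂.1.2 hue₂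

section HighDegree

variable (hU : IsUniform E r) (hL : IsLinear E) (hB : B4Free E)
include hU hL hB

theorem inter_eq_empty_of_add_two_le_degree (hv : r + 2 ≤ degree E v) (hf : f ∈ E)
    (hvf : v ∉ f) (he : e ∈ E) (hve : v ∈ e) : f ∩ e = ∅ := by
  by_contra hmeet
  rw [← ne_eq, ← nonempty_iff_ne_empty] at hmeet
  have hmissing : 1 < #((E.filter (fun e => v ∈ e)).filter (fun g => ¬ (f ∩ g).Nonempty)) := by
    have hsplit := card_filter_add_card_filter_not
      (s := E.filter (fun e => v ∈ e)) (fun g => (f ∩ g).Nonempty)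
    have hmeeting := hL.card_meeting_le hvf
    rw [hU f hf] at hmeeting
    unfold degree at hv
    omega
  obtain ⟨e₂, he₂, e₃, he₃, h23⟩ := one_lt_card.mp hmissing
  simp only [mem_filter, not_nonempty_iff_eq_empty] at he₂ he₃
  have hne : ∀ g, f ∩ g = ∅ → e ≠ g := by
    rintro g hg rfl
    exact hmeet.ne_empty hg
  apply hB
  refine ⟨e, he, e₂, he₂.1.1, e₃, he₃.1.1, f, hf, v, hne _ he₂.2, hne _ he₃.2, ?_, h23, ?_, ?_,
    hve, he₂.1.2, he₃.1.2, hvf, hmeet, he₂.2, he₃.2⟩ <;>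
  · rintro rfl
    simp_all

theorem degree_eq_one_of_add_two_le_degree (he : e ∈ E) (hc : c ∈ e)
    (hdeg : r + 2 ≤ degree E c) (hw : w ∈ e) (hwc : w ≠ c) : degree E w = 1 := by
  rw [degree, card_eq_one]
  refine ⟨e, eq_singleton_iff_unique_mem.mpr ⟨mem_filter.mpr ⟨he, hw⟩, ?_⟩⟩
  rintro g hg
  obtain ⟨hg, hwg⟩ := mem_filter.mp hg
  by_cases hcg : c ∈ g
  · exact hL.eq_of_mem_of_mem hg he hwc hwg hcg hw hc
  · have := inter_eq_empty_of_add_two_le_degree hU hL hB hdeg hg hcg he hc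
    exact absurd this (nonempty_iff_ne_empty.mp ⟨w, mem_inter.mpr ⟨hwg, hw⟩⟩)

theorem lt_weight_or_forall_degree_eq (hr : 2 ≤ r) (he : e ∈ E) :
    (r : ℚ) / (r + 1) < weight E e ∨ ∀ w ∈ e, degree E w = r + 1 := by
  by_cases hhigh : ∃ c ∈ e, r + 2 ≤ degree E c
  · obtain ⟨c, hc, hdeg⟩ := hhigh
    left
    have hr' : (2 : ℚ) ≤ r := by exact_mod_cast hr
    calc (r : ℚ) / (r + 1) < r - 1 := by
          rw [div_lt_iff₀ (by positivity)]
          nlinarith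
      _ = ∑ w ∈ e.erase c, ((degree E w : ℚ))⁻¹ := by
          rw [sum_congr rfl fun w hw => by
            rw [degree_eq_one_of_add_two_le_degree hU hL hB he hc hdeg (mem_of_mem_erase hw)
              (ne_of_mem_erase hw), Nat.cast_one, inv_one]]
          rw [sum_const, card_erase_of_mem hc, hU e he, nsmul_one, Nat.cast_pred (by omega)]
      _ ≤ weight E e :=
          sum_le_sum_of_subset_of_nonneg (erase_subset c e) fun _ _ _ => by positivity
  · push Not at hhigh
    by_cases hall : ∀ w ∈ e, degree E w = r + 1
    · exact Or.inr hall
    · left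
      push Not at hall
      obtain ⟨w, hw, hne⟩ := hall
      have hle : ∀ u ∈ e, (degree E u : ℚ) ≤ r + 1 := fun u hu => by
        exact_mod_cast Nat.le_of_lt_succ (hhigh u hu)
      calc (r : ℚ) / (r + 1) = ∑ _u ∈ e, ((r : ℚ) + 1)⁻¹ := by
            rw [sum_const, hU e he, nsmul_eq_mul, div_eq_mul_inv]
        _ < weight E e := by
            refine sum_lt_sum (fun u hu => inv_anti₀ ?_ (hle u hu)) ⟨w, hw, inv_strictAnti₀ ?_ ?_⟩
            · exact_mod_cast degree_pos_of_mem he hu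
            · exact_mod_cast degree_pos_of_mem he hw
            · exact lt_of_le_of_ne (hle w hw) (by exact_mod_cast hne)

theorem div_le_weight (hr : 2 ≤ r) (he : e ∈ E) : (r : ℚ) / (r + 1) ≤ weight E e := by
  rcases lt_weight_or_forall_degree_eq hU hL hB hr he with hlt | hall
  · exact hlt.le
  · rw [weight, sum_congr rfl fun w hw => by rw [hall w hw], sum_const, hU e he, nsmul_eq_mul]
    push_cast
    rw [div_eq_mul_inv]

end HighDegree

theorem sum_weight [Fintype V] (hiso : ∀ v, degree E v ≠ 0) :
    ∑ e ∈ E, weight E e = Fintype.card V := by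
  unfold weight
  rw [sum_comm' (t' := univ) (s' := fun w => E.filter (fun e => w ∈ e))
    (fun e w => by simp [and_comm])]
  calc ∑ v, ∑ _e ∈ E.filter (fun e => v ∈ e), ((degree E v : ℚ))⁻¹ = ∑ _v : V, (1 : ℚ) :=
        sum_congr rfl fun v _ => by
          rw [sum_const, nsmul_eq_mul]
          exact mul_inv_cancel₀ (Nat.cast_ne_zero.mpr (hiso v))
    _ = Fintype.card V := by rw [sum_const, card_univ, nsmul_one]

end Hypergraph

open Hypergraph in
/-- A linear r-uniform B_4^r-free hypergraph on n vertices with no isolated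
vertices and r·|E(H)| = (r+1)·n is (r+1)-regular. -/
theorem stmt_11 {V : Type*} [Fintype V] [DecidableEq V]
    (r n : ℕ) (hr : 3 ≤ r)
    (hn : Fintype.card V = n)
    (E : Finset (Finset V))
    (huniform : ∀ e ∈ E, e.card = r)
    (hlinear : ∀ e ∈ E, ∀ f ∈ E, e ≠ f → (e ∩ f).card ≤ 1)
    (hnoiso : ∀ v : V, 1 ≤ (E.filter (fun e => v ∈ e)).card)
    (hB4free : ¬ ∃ e₁ ∈ E, ∃ e₂ ∈ E, ∃ e₃ ∈ E, ∃ f ∈ E, ∃ v : V,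
      e₁ ≠ e₂ ∧ e₁ ≠ e₃ ∧ e₁ ≠ f ∧ e₂ ≠ e₃ ∧ e₂ ≠ f ∧ e₃ ≠ f ∧
      v ∈ e₁ ∧ v ∈ e₂ ∧ v ∈ e₃ ∧ v ∉ f ∧
      (f ∩ e₁).Nonempty ∧ f ∩ e₂ = ∅ ∧ f ∩ e₃ = ∅)
    (hcount : r * E.card = (r + 1) * n) :
    ∀ v : V, (E.filter (fun e => v ∈ e)).card = r + 1 := by
  have hr2 : 2 ≤ r := by omega
  have htotal : ∑ _e ∈ E, (r : ℚ) / (r + 1) = ∑ e ∈ E, weight E e := by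
    rw [sum_weight fun v => Nat.one_le_iff_ne_zero.mp (hnoiso v), hn, sum_const, nsmul_eq_mul, mul_div_assoc',
      div_eq_iff (by positivity)]
    exact_mod_cast (by linarith : E.card * r = n * (r + 1))
  have hweight := (sum_eq_sum_iff_of_le fun e he =>
    div_le_weight huniform hlinear hB4free hr2 he).mp htotal
  intro v
  obtain ⟨e, he⟩ := card_pos.mp (hnoiso v)
  rw [mem_filter] at he
  exact ((lt_weight_or_forall_degree_eq huniform hlinear hB4free hr2 he.1).resolve_left
    (hweight e he.1).not_lt) v he.2
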